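/- Let λ,μ ∈ P_{≥0} be dominant weights with λ−μ ∈ Q. Then for any 𝐤 ∈ ℕ[Φ]^W: (i) Π(λ+ρ_𝐤) ∩ Π(μ+ρ_𝐤) = Π(λ∧μ + ρ_𝐤), and (ii) Π^Q(λ+ρ_𝐤) ∩ Π^Q(μ+ρ_𝐤) = Π^Q(λ∧μ + ρ_𝐤). -/

import Mathlib

open RealInnerProductSpace Pointwise

/-- The covector `α^∨ := 2α/⟨α,α⟩` of a vector `α`. -/
noncomputable def corootOf {V : Type*} [NormedAddCommGroup V] [InnerProductSpace ℝ V]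
    (α : V) : V := (2 / ⟪α, α⟫) • α

/-- The reflection `s_α(u) := u - ⟨u,α^∨⟩α`. -/
noncomputable def rsReflect {V : Type*} [NormedAddCommGroup V] [InnerProductSpace ℝ V]
    (α u : V) : V := u - ⟪u, corootOf α⟫ • α

/-- An irreducible crystallographic reduced root system in a Euclidean space `V`,
together with a chosen base `α_1, …, α_n` of simple roots. -/
structure RootSystemData (V : Type*) [NormedAddCommGroup V] [InnerProductSpace ℝ V]
    (n : ℕ) where
  Φ : Set V
  finite : Φ.Finite
  nonzero : ∀ α ∈ Φ, α ≠ 0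
  spans : Submodule.span ℝ Φ = ⊤
  reflect_mem : ∀ α ∈ Φ, ∀ β ∈ Φ, rsReflect α β ∈ Φ
  reduced : ∀ α ∈ Φ, (Submodule.span ℝ {α} : Set V) ∩ Φ = {α, -α}
  crystal : ∀ α ∈ Φ, ∀ β ∈ Φ, ∃ z : ℤ, ⟪β, corootOf α⟫ = (z : ℝ)
  irred : ¬∃ Φ₁ Φ₂ : Set V, Φ₁.Nonempty ∧ Φ₂.Nonempty ∧ Φ₁ ∪ Φ₂ = Φ ∧
    Disjoint Φ₁ Φ₂ ∧ ∀ α ∈ Φ₁, ∀ β ∈ Φ₂, ⟪α, β⟫ = 0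
  simple : Fin n → V
  simple_mem : ∀ i, simple i ∈ Φ
  simple_indep : LinearIndependent ℝ simple
  simple_span : Submodule.span ℝ (Set.range simple) = ⊤
  root_combo : ∀ α ∈ Φ, (∃ c : Fin n → ℕ, α = ∑ i, (c i : ℝ) • simple i) ∨
    (∃ c : Fin n → ℕ, α = -∑ i, (c i : ℝ) • simple i)

namespace RootSystemData

variable {V : Type*} [NormedAddCommGroup V] [InnerProductSpace ℝ V] {n : ℕ}

/-- The set `Φ^+` of positive roots. -/
def Pos (R : RootSystemData V n) : Set V :=
  {α | α ∈ R.Φ ∧ ∃ c : Fin n → ℕ, α = ∑ i, (c i : ℝ) • R.simple i}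

/-- The Weyl group `W`, as the subgroup of linear automorphisms of `V` generated by
the reflections `s_α`, `α ∈ Φ`. -/
def weyl (R : RootSystemData V n) : Subgroup (V ≃ₗ[ℝ] V) :=
  Subgroup.closure {w | ∃ α ∈ R.Φ, ∀ u, w u = rsReflect α u}

/-- The Weyl group orbit `W(l)`. -/
def orbit (R : RootSystemData V n) (l : V) : Set V := {v | ∃ w ∈ R.weyl, v = w l}

/-- The permutohedron `Π(l) := ConvexHull W(l)`. -/
noncomputable def perm (R : RootSystemData V n) (l : V) : Set V := convexHull ℝ (R.orbit l)

/-- The root lattice `Q := Span_ℤ(Φ)`. -/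
def rootLattice (R : RootSystemData V n) : AddSubgroup V := AddSubgroup.closure R.Φ

/-- The coset `Q + l`. -/
def latticeCoset (R : RootSystemData V n) (l : V) : Set V := {v | v - l ∈ R.rootLattice}

/-- The discrete permutohedron `Π^Q(l) := Π(l) ∩ (Q + l)`. -/
noncomputable def permQ (R : RootSystemData V n) (l : V) : Set V :=
  R.perm l ∩ R.latticeCoset l

/-- The weight lattice `P`. -/
def weights (R : RootSystemData V n) : Set V :=
  {v | ∀ α ∈ R.Φ, ∃ z : ℤ, ⟪v, corootOf α⟫ = (z : ℝ)}

/-- A vector is dominant if it pairs nonnegatively with all simple coroots. -/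
def IsDomVec (R : RootSystemData V n) (v : V) : Prop :=
  ∀ i, 0 ≤ ⟪v, corootOf (R.simple i)⟫

/-- Dominant weights, i.e. elements of `P_{≥0}`. -/
def IsDominant (R : RootSystemData V n) (l : V) : Prop :=
  l ∈ R.weights ∧ R.IsDomVec l

/-- Root order: `μ ≤ l` iff `l − μ` is a nonnegative integer combination of simple roots. -/
def rootOrderLE (R : RootSystemData V n) (μ l : V) : Prop :=
  ∃ c : Fin n → ℕ, l - μ = ∑ i, (c i : ℝ) • R.simple i

/-- Membership in `ℕ[Φ]^W`: `W`-invariance of `k : Φ → ℕ`. -/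
def IsWInvariant (R : RootSystemData V n) (k : V → ℕ) : Prop :=
  ∀ w ∈ R.weyl, ∀ α ∈ R.Φ, k (w α) = k α

/-- Short roots: minimizers of the squared length. -/
def IsShort (R : RootSystemData V n) (α : V) : Prop :=
  α ∈ R.Φ ∧ ∀ β ∈ R.Φ, ⟪α, α⟫ ≤ ⟪β, β⟫

/-- Long roots: maximizers of the squared length. -/
def IsLong (R : RootSystemData V n) (α : V) : Prop :=
  α ∈ R.Φ ∧ ∀ β ∈ R.Φ, ⟪β, β⟫ ≤ ⟪α, α⟫

/-- Simply laced: all roots have the same length. -/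
def IsSimplyLaced (R : RootSystemData V n) : Prop :=
  ∀ α ∈ R.Φ, ∀ β ∈ R.Φ, ⟪α, α⟫ = ⟪β, β⟫

/-- `k ∈ ℕ[Φ]^W` is good if `Φ` is simply laced, or else `k` vanishing on short roots
implies it vanishes on long roots. -/
def IsGood (R : RootSystemData V n) (k : V → ℕ) : Prop :=
  R.IsSimplyLaced ∨ ((∀ α, R.IsShort α → k α = 0) → ∀ α, R.IsLong α → k α = 0)

/-- The symmetric interval-firing relation: `l → l + α` whenever
`⟨l + α/2, α^∨⟩ ∈ {−k(α), …, k(α)}`. -/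
def symFire (R : RootSystemData V n) (k : V → ℕ) (l m : V) : Prop :=
  ∃ α ∈ R.Pos, m = l + α ∧ ∃ z : ℤ,
    ⟪l + (2⁻¹ : ℝ) • α, corootOf α⟫ = (z : ℝ) ∧ -(k α : ℤ) ≤ z ∧ z ≤ (k α : ℤ)

/-- `ν` is the stabilization of `μ` for the symmetric interval-firing process. -/
def symStab (R : RootSystemData V n) (k : V → ℕ) (μ ν : V) : Prop :=
  Relation.ReflTransGen (R.symFire k) μ ν ∧ ∀ ξ, ¬ R.symFire k ν ξ

/-- The length of a Weyl group element: its number of inversions. -/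
noncomputable def len (R : RootSystemData V n) (w : V ≃ₗ[ℝ] V) : ℕ :=
  {α | α ∈ R.Pos ∧ w α ∉ R.Pos}.ncard

/-- `w` is the minimal length element of `W` such that `w⁻¹(l)` is dominant
(i.e. `w = w_l`). -/
def IsMinDomRep (R : RootSystemData V n) (l : V) (w : V ≃ₗ[ℝ] V) : Prop :=
  w ∈ R.weyl ∧ R.IsDomVec (w⁻¹ l) ∧
    ∀ w' ∈ R.weyl, R.IsDomVec (w'⁻¹ l) → R.len w ≤ R.len w'

/-- The fiber `(s^sym_𝐤)⁻¹(l)`: the set of weights whose symmetric interval-firing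
stabilization is `η_𝐤(l) = l + w_l(ρ_𝐤)`.  Here `ρk` is the vector `ρ_𝐤`. -/
def symFiber (R : RootSystemData V n) (k : V → ℕ) (ρk : V) (l : V) : Set V :=
  {μ | μ ∈ R.weights ∧ ∃ w, R.IsMinDomRep l w ∧ R.symStab k μ (l + w ρk)}

/-- The symmetric Ehrhart-like count `L^sym_l(𝐤)`. -/
noncomputable def symL (R : RootSystemData V n) (k : V → ℕ) (ρk : V) (l : V) : ℕ :=
  (R.symFiber k ρk l).ncard

/-- `I^{0,1}_l := {i : ⟨l, α_i^∨⟩ ∈ {0,1}}`. -/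
def I01 (R : RootSystemData V n) (l : V) : Set (Fin n) :=
  {i | ⟪l, corootOf (R.simple i)⟫ = 0 ∨ ⟪l, corootOf (R.simple i)⟫ = 1}

/-- The parabolic subgroup `W_I`. -/
def parabolic (R : RootSystemData V n) (I : Set (Fin n)) : Subgroup (V ≃ₗ[ℝ] V) :=
  Subgroup.closure {w | ∃ i ∈ I, ∀ u, w u = rsReflect (R.simple i) u}

/-- The parabolic sub-root system `Φ_I := Φ ∩ Span_ℝ{α_i : i ∈ I}`. -/
def parabolicRoots (R : RootSystemData V n) (I : Set (Fin n)) : Set V :=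
  R.Φ ∩ (Submodule.span ℝ (R.simple '' I) : Set V)

/-- The set `W^I` of minimal length representatives of the cosets of `W_I` in `W`. -/
noncomputable def minReps (R : RootSystemData V n) (I : Set (Fin n)) : Set (V ≃ₗ[ℝ] V) :=
  {w | w ∈ R.weyl ∧ ∀ w' ∈ R.weyl, w⁻¹ * w' ∈ R.parabolic I → R.len w ≤ R.len w'}

end RootSystemData

/-- The relative volume `rVol_Λ(X)` of a finite (linearly independent) set `X` with
respect to a lattice `Λ`: the number of `Λ`-points in the half-open parallelepiped
`Σ_{x ∈ X} [0, x)` (equivalently, the gcd of the maximal minors of the matrix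
expressing the elements of `X` in a basis of `Λ`). -/
noncomputable def rVol {V : Type*} [AddCommGroup V] [Module ℝ V]
    (Λ : AddSubgroup V) (X : Finset V) : ℕ :=
  {v : V | v ∈ Λ ∧ ∃ c : V → ℝ, (∀ x ∈ X, 0 ≤ c x ∧ c x < 1) ∧
    v = ∑ x ∈ X, c x • x}.ncard

/-!
For dominant `x`, the permutohedron `Π(x)` is the set of `v` with `w v ≤ x` for all `w ∈ W`, where
`≤` compares coordinates in the basis of simple roots. The inclusion `⊆` holds because `x - w x`
is a nonnegative combination of simple roots (induction on the length of a word for `w`, using the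
exchange condition); for `⊇`, a point outside `Π(x)` is separated from it by a functional which
some `u ∈ W` moves into the dominant chamber, and then `u v ≤ x` fails.

In this description `Π(x)` is cut out by upper bounds on coordinates, so
`Π(x) ∩ Π(y) = Π(x ∧ y)` as soon as `x ∧ y` is dominant, which holds because simple roots
pairwise form obtuse angles. Translating by `ρ_𝐤` commutes with `∧`, and when `λ - μ ∈ Q` the
difference `λ - λ ∧ μ` has integer coordinates, so the three cosets of `Q` in the discrete
statement coincide.
-/

section Reflection

variable {V : Type*} [NormedAddCommGroup V] [InnerProductSpace ℝ V]

lemma inner_corootOf (α u : V) : ⟪u, corootOf α⟫ = 2 / ⟪α, α⟫ * ⟪u, α⟫ := by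
  simp [corootOf, real_inner_smul_right]

lemma inner_self_corootOf {α : V} (hα : α ≠ 0) : ⟪α, corootOf α⟫ = 2 := by
  have : ⟪α, α⟫ ≠ 0 := inner_self_ne_zero.mpr hα
  rw [inner_corootOf]; field_simp

lemma inner_corootOf_nonneg_iff {α : V} (hα : α ≠ 0) (u : V) :
    0 ≤ ⟪u, corootOf α⟫ ↔ 0 ≤ ⟪u, α⟫ := by
  rw [inner_corootOf]
  exact mul_nonneg_iff_of_pos_left (div_pos two_pos (real_inner_self_pos.mpr hα))

lemma inner_corootOf_pos_iff {α : V} (hα : α ≠ 0) (u : V) :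
    0 < ⟪u, corootOf α⟫ ↔ 0 < ⟪u, α⟫ := by
  rw [inner_corootOf]
  exact mul_pos_iff_of_pos_left (div_pos two_pos (real_inner_self_pos.mpr hα))

lemma rsReflect_zero (u : V) : rsReflect 0 u = u := by
  simp [rsReflect]

lemma rsReflect_self (α : V) : rsReflect α α = -α := by
  rcases eq_or_ne α 0 with rfl | hα
  · simp [rsReflect]
  · rw [rsReflect, inner_self_corootOf hα, two_smul]; abel

lemma rsReflect_rsReflect (α u : V) : rsReflect α (rsReflect α u) = u := by
  rcases eq_or_ne α 0 with rfl | hα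
  · simp [rsReflect_zero]
  · simp only [rsReflect, inner_sub_left, real_inner_smul_left, inner_self_corootOf hα]
    module

lemma inner_rsReflect_rsReflect (α u v : V) : ⟪rsReflect α u, rsReflect α v⟫ = ⟪u, v⟫ := by
  rcases eq_or_ne α 0 with rfl | hα
  · simp [rsReflect_zero]
  · have : ⟪α, α⟫ ≠ 0 := inner_self_ne_zero.mpr hα
    simp only [rsReflect, inner_sub_left, inner_sub_right, real_inner_smul_left,
      real_inner_smul_right, inner_corootOf, real_inner_comm α]
    field_simp
    ring

lemma rsReflect_neg (α u : V) : rsReflect (-α) u = rsReflect α u := by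
  simp [rsReflect, corootOf]

noncomputable def rsReflectEquiv (α : V) : V ≃ₗ[ℝ] V :=
  LinearEquiv.ofInvolutive
    { toFun := rsReflect α
      map_add' := fun u v => by simp only [rsReflect, inner_add_left, add_smul]; abel
      map_smul' := fun r u => by simp only [rsReflect, real_inner_smul_left, smul_sub,
        smul_smul, RingHom.id_apply] }
    (rsReflect_rsReflect α)

@[simp] lemma rsReflectEquiv_apply (α u : V) : rsReflectEquiv α u = rsReflect α u := rfl

lemma rsReflectEquiv_mul_self (α : V) : rsReflectEquiv α * rsReflectEquiv α = 1 :=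
  LinearEquiv.ext (rsReflect_rsReflect α)

lemma rsReflectEquiv_inv (α : V) : (rsReflectEquiv α)⁻¹ = rsReflectEquiv α :=
  inv_eq_of_mul_eq_one_left (rsReflectEquiv_mul_self α)

lemma rsReflectEquiv_neg (α : V) : rsReflectEquiv (-α) = rsReflectEquiv α :=
  LinearEquiv.ext (rsReflect_neg α)

lemma rsReflectEquiv_map {w : V ≃ₗ[ℝ] V} (hw : ∀ u v, ⟪w u, w v⟫ = ⟪u, v⟫) (α : V) :
    rsReflectEquiv (w α) = w * rsReflectEquiv α * w⁻¹ := by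
  refine LinearEquiv.ext fun u => ?_
  obtain ⟨u, rfl⟩ := w.surjective u
  have hcoroot : corootOf (w α) = w (corootOf α) := by rw [corootOf, corootOf, hw, map_smul]
  simp [rsReflect, hcoroot, hw]

end Reflection

namespace RootSystemData

variable {V : Type*} [NormedAddCommGroup V] [InnerProductSpace ℝ V] {n : ℕ}
  (R : RootSystemData V n)

section Weyl

lemma rsReflectEquiv_mem_weyl {α : V} (hα : α ∈ R.Φ) : rsReflectEquiv α ∈ R.weyl :=
  Subgroup.subset_closure ⟨α, hα, fun _ => rfl⟩

lemma weyl_eq_closure : R.weyl = Subgroup.closure (rsReflectEquiv '' R.Φ) := by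
  refine congrArg Subgroup.closure (Set.ext fun w => ⟨?_, ?_⟩)
  · rintro ⟨α, hα, hw⟩
    exact ⟨α, hα, LinearEquiv.ext fun u => (hw u).symm⟩
  · rintro ⟨α, hα, rfl⟩
    exact ⟨α, hα, fun _ => rfl⟩

@[elab_as_elim]
lemma weyl_induction {p : (V ≃ₗ[ℝ] V) → Prop} (one : p 1)
    (mul : ∀ α ∈ R.Φ, ∀ w, p w → p (rsReflectEquiv α * w)) {w : V ≃ₗ[ℝ] V}
    (hw : w ∈ R.weyl) : p w := by
  rw [weyl_eq_closure] at hw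
  induction hw using Subgroup.closure_induction_left with
  | one => exact one
  | mul_left _ hx _ _ ih =>
    obtain ⟨α, hα, rfl⟩ := hx
    exact mul α hα _ ih
  | inv_mul_cancel _ hx _ _ ih =>
    obtain ⟨α, hα, rfl⟩ := hx
    rw [rsReflectEquiv_inv]
    exact mul α hα _ ih

lemma inner_map_map_of_mem_weyl {w : V ≃ₗ[ℝ] V} (hw : w ∈ R.weyl) (u v : V) :
    ⟪w u, w v⟫ = ⟪u, v⟫ := by
  exact R.weyl_induction (p := fun w => ∀ u v, ⟪w u, w v⟫ = ⟪u, v⟫) (fun _ _ => rfl)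
    (fun α _ _ ih u v => (inner_rsReflect_rsReflect α _ _).trans (ih u v)) hw u v

lemma map_mem_of_mem_weyl {w : V ≃ₗ[ℝ] V} (hw : w ∈ R.weyl) {α : V} (hα : α ∈ R.Φ) :
    w α ∈ R.Φ := by
  exact R.weyl_induction (p := fun w => ∀ β ∈ R.Φ, w β ∈ R.Φ) (fun _ hβ => hβ)
    (fun γ hγ _ ih β hβ => R.reflect_mem γ hγ _ (ih β hβ)) hw α hα

lemma finite_weyl : Finite R.weyl := by
  have : Finite R.Φ := R.finite.to_subtype
  refine Finite.of_injective (fun w : R.weyl => fun α : R.Φ =>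
    (⟨w.1 α, R.map_mem_of_mem_weyl w.2 α.2⟩ : R.Φ)) fun w₁ w₂ h => ?_
  refine Subtype.ext (LinearEquiv.toLinearMap_injective (LinearMap.ext_on R.spans ?_))
  exact fun α hα => congrArg Subtype.val (congrFun h ⟨α, hα⟩)

lemma finite_orbit (l : V) : (R.orbit l).Finite := by
  have := R.finite_weyl
  convert Set.finite_range fun w : R.weyl => w.1 l
  ext v
  exact ⟨fun ⟨w, hw, hv⟩ => ⟨⟨w, hw⟩, hv.symm⟩, fun ⟨w, hv⟩ => ⟨w.1, w.2, hv.symm⟩⟩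

end Weyl

section Coordinates

noncomputable def simpleBasis : Module.Basis (Fin n) ℝ V :=
  Module.Basis.mk R.simple_indep R.simple_span.ge

noncomputable def coords : V ≃ₗ[ℝ] (Fin n → ℝ) := R.simpleBasis.equivFun

lemma coords_symm_apply (a : Fin n → ℝ) : R.coords.symm a = ∑ i, a i • R.simple i := by
  simp [coords, simpleBasis]

lemma coords_sum (a : Fin n → ℝ) : R.coords (∑ i, a i • R.simple i) = a := by
  rw [← coords_symm_apply, LinearEquiv.apply_symm_apply]

lemma simpleBasis_apply (i : Fin n) : R.simpleBasis i = R.simple i := Module.Basis.mk_apply _ _ i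

lemma coords_simple (i : Fin n) : R.coords (R.simple i) = Pi.single i 1 := by
  ext j
  rw [coords, ← simpleBasis_apply, Module.Basis.equivFun_self, Pi.single_apply]
  simp only [eq_comm]

lemma finiteDimensional (R : RootSystemData V n) : FiniteDimensional ℝ V :=
  Module.Finite.of_basis R.simpleBasis

lemma coords_nonneg_of_mem_pos {α : V} (hα : α ∈ R.Pos) : 0 ≤ R.coords α := by
  obtain ⟨-, c, rfl⟩ := hα
  rw [coords_sum]
  exact fun i => Nat.cast_nonneg _

lemma neg_mem_Φ {α : V} (hα : α ∈ R.Φ) : -α ∈ R.Φ := by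
  simpa [rsReflect_self] using R.reflect_mem α hα α hα

lemma mem_pos_or_neg_mem_pos {α : V} (hα : α ∈ R.Φ) : α ∈ R.Pos ∨ -α ∈ R.Pos := by
  rcases R.root_combo α hα with ⟨c, hc⟩ | ⟨c, hc⟩
  · exact Or.inl ⟨hα, c, hc⟩
  · exact Or.inr ⟨R.neg_mem_Φ hα, c, by rw [hc, neg_neg]⟩

lemma neg_notMem_pos {α : V} (hα : α ∈ R.Pos) : -α ∉ R.Pos := fun hneg =>
  R.nonzero α hα.1 <| R.coords.injective <| le_antisymm
    (by simpa using R.coords_nonneg_of_mem_pos hneg) (by simpa using R.coords_nonneg_of_mem_pos hα)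

lemma simple_mem_pos (i : Fin n) : R.simple i ∈ R.Pos := by
  refine ⟨R.simple_mem i, Pi.single i 1, ?_⟩
  simp [Pi.single_apply]

end Coordinates

section SimpleRoots

lemma mem_pos_of_coords_pos {α : V} (hα : α ∈ R.Φ) {j : Fin n} (hj : 0 < R.coords α j) :
    α ∈ R.Pos := by
  refine (R.mem_pos_or_neg_mem_pos hα).resolve_right fun hneg => ?_
  have : 0 ≤ -R.coords α j := by simpa using R.coords_nonneg_of_mem_pos hneg j
  linarith

lemma coords_rsReflect_simple (i : Fin n) (u : V) :
    R.coords (rsReflect (R.simple i) u)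
      = R.coords u - ⟪u, corootOf (R.simple i)⟫ • Pi.single i 1 := by
  rw [rsReflect, map_sub, map_smul, coords_simple]

lemma sum_coords_rsReflect_simple (i : Fin n) (u : V) :
    ∑ j, R.coords (rsReflect (R.simple i) u) j
      = ∑ j, R.coords u j - ⟪u, corootOf (R.simple i)⟫ := by
  simp [coords_rsReflect_simple, Finset.sum_sub_distrib, Pi.single_apply]

lemma inner_simple_simple_nonpos {i j : Fin n} (hij : i ≠ j) :
    ⟪R.simple i, R.simple j⟫ ≤ 0 := by
  by_contra! hpos
  have hcoords := R.coords_rsReflect_simple i (R.simple j)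
  rw [coords_simple] at hcoords
  have hβ := R.coords_nonneg_of_mem_pos <|
    R.mem_pos_of_coords_pos (R.reflect_mem _ (R.simple_mem i) _ (R.simple_mem j)) (j := j)
      (by simp [hcoords, hij])
  have hi := hβ i
  rw [real_inner_comm, ← inner_corootOf_pos_iff (R.nonzero _ (R.simple_mem i))] at hpos
  simp [hcoords, hij.symm] at hi
  linarith

lemma inner_simple_corootOf_nonpos {i j : Fin n} (hij : i ≠ j) :
    ⟪R.simple i, corootOf (R.simple j)⟫ ≤ 0 := by
  have := R.inner_simple_simple_nonpos hij
  contrapose! this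
  exact (inner_corootOf_pos_iff (R.nonzero _ (R.simple_mem j)) _).mp this

lemma eq_simple_of_coords_eq_zero {α : V} (hα : α ∈ R.Pos) {i : Fin n}
    (h : ∀ j, j ≠ i → R.coords α j = 0) : α = R.simple i := by
  have hspan : α ∈ (Submodule.span ℝ {R.simple i} : Set V) := by
    refine Submodule.mem_span_singleton.mpr ⟨R.coords α i, R.coords.injective ?_⟩
    ext j
    by_cases hji : j = i
    · simp [hji, coords_simple]
    · simp [coords_simple, hji, h j hji]
  have : α ∈ ({R.simple i, -R.simple i} : Set V) := R.reduced _ (R.simple_mem i) ▸ ⟨hspan, hα.1⟩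
  rcases this with h | h
  · exact h
  · exact absurd (h ▸ hα) (R.neg_notMem_pos (R.simple_mem_pos i))

lemma rsReflect_simple_mem_pos (i : Fin n) {α : V} (hα : α ∈ R.Pos) (hne : α ≠ R.simple i) :
    rsReflect (R.simple i) α ∈ R.Pos := by
  obtain ⟨j, hji, hj⟩ : ∃ j, j ≠ i ∧ R.coords α j ≠ 0 := by
    by_contra! h
    exact hne (R.eq_simple_of_coords_eq_zero hα h)
  refine R.mem_pos_of_coords_pos (R.reflect_mem _ (R.simple_mem i) _ hα.1) (j := j) ?_
  simpa [coords_rsReflect_simple, hji] using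
    lt_of_le_of_ne (R.coords_nonneg_of_mem_pos hα j) (Ne.symm hj)

end SimpleRoots

section Words

noncomputable def wordProd (L : List (Fin n)) : V ≃ₗ[ℝ] V :=
  (L.map fun i => rsReflectEquiv (R.simple i)).prod

@[simp] lemma wordProd_nil : R.wordProd [] = 1 := rfl

lemma wordProd_cons (i : Fin n) (L : List (Fin n)) :
    R.wordProd (i :: L) = rsReflectEquiv (R.simple i) * R.wordProd L := by
  simp [wordProd]

lemma wordProd_append (L M : List (Fin n)) :
    R.wordProd (L ++ M) = R.wordProd L * R.wordProd M := by
  simp [wordProd]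

lemma wordProd_singleton (i : Fin n) : R.wordProd [i] = rsReflectEquiv (R.simple i) := by
  simp [wordProd]

lemma wordProd_mem_weyl (L : List (Fin n)) : R.wordProd L ∈ R.weyl := by
  induction L with
  | nil => exact R.weyl.one_mem
  | cons i L ih =>
    rw [wordProd_cons]
    exact R.weyl.mul_mem (R.rsReflectEquiv_mem_weyl (R.simple_mem i)) ih

lemma wordProd_reverse (L : List (Fin n)) : R.wordProd L.reverse = (R.wordProd L)⁻¹ := by
  induction L with
  | nil => simp
  | cons i L ih =>
    rw [List.reverse_cons, wordProd_append, ih, wordProd_singleton, wordProd_cons, mul_inv_rev,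
      rsReflectEquiv_inv]

lemma exists_inner_simple_pos {α : V} (hα : α ∈ R.Pos) : ∃ i, 0 < ⟪α, R.simple i⟫ := by
  by_contra! h
  obtain ⟨hα, c, hc⟩ := hα
  refine R.nonzero α hα (real_inner_self_nonpos.mp ?_)
  nth_rewrite 2 [hc]
  rw [inner_sum]
  exact Finset.sum_nonpos fun i _ => by
    rw [real_inner_smul_right]
    exact mul_nonpos_of_nonneg_of_nonpos (Nat.cast_nonneg _) (h i)

/-- Reflecting by a simple root `α_i` with `⟨α, α_i⟩ > 0` lowers the height `∑ i, coords α i`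
by a positive integer. -/
lemma exists_wordProd_simple_eq {α : V} (hα : α ∈ R.Pos) :
    ∃ (L : List (Fin n)) (m : Fin n), α = R.wordProd L (R.simple m) := by
  obtain ⟨N, hN⟩ := exists_nat_gt (∑ i, R.coords α i)
  induction N generalizing α with
  | zero =>
    have := Finset.sum_nonneg fun i (_ : i ∈ Finset.univ) => R.coords_nonneg_of_mem_pos hα i
    push_cast at hN
    linarith
  | succ N ih =>
    by_cases hsimple : ∃ m, α = R.simple m
    · obtain ⟨m, rfl⟩ := hsimple
      exact ⟨[], m, rfl⟩
    push Not at hsimple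
    obtain ⟨i, hi⟩ := R.exists_inner_simple_pos hα
    obtain ⟨z, hz⟩ := R.crystal _ (R.simple_mem i) α hα.1
    have hz1 : (1 : ℝ) ≤ z := by
      have hz0 := (inner_corootOf_pos_iff (R.nonzero _ (R.simple_mem i)) α).mpr hi
      rw [hz] at hz0
      exact_mod_cast (show (0 : ℤ) < z by exact_mod_cast hz0)
    obtain ⟨L, m, hLm⟩ := ih (R.rsReflect_simple_mem_pos i hα (hsimple i)) (by
      rw [sum_coords_rsReflect_simple, hz]
      push_cast at hN
      linarith)
    refine ⟨i :: L, m, ?_⟩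
    rw [wordProd_cons, LinearEquiv.mul_apply, ← hLm, rsReflectEquiv_apply, rsReflect_rsReflect]

lemma exists_rsReflectEquiv_eq_wordProd {α : V} (hα : α ∈ R.Φ) :
    ∃ L, rsReflectEquiv α = R.wordProd L := by
  wlog hpos : α ∈ R.Pos generalizing α
  · rw [← rsReflectEquiv_neg]
    exact this (R.neg_mem_Φ hα) ((R.mem_pos_or_neg_mem_pos hα).resolve_left hpos)
  obtain ⟨M, m, rfl⟩ := R.exists_wordProd_simple_eq hpos
  refine ⟨M ++ [m] ++ M.reverse, ?_⟩
  rw [rsReflectEquiv_map (R.inner_map_map_of_mem_weyl (R.wordProd_mem_weyl M)),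
    wordProd_append, wordProd_append, wordProd_singleton, wordProd_reverse]

lemma exists_eq_wordProd {w : V ≃ₗ[ℝ] V} (hw : w ∈ R.weyl) : ∃ L, w = R.wordProd L := by
  refine R.weyl_induction ⟨[], rfl⟩ (fun α hα w ⟨L, hL⟩ => ?_) hw
  obtain ⟨K, hK⟩ := R.exists_rsReflectEquiv_eq_wordProd hα
  exact ⟨K ++ L, by rw [hK, hL, wordProd_append]⟩

lemma exchange_condition (L : List (Fin n)) (j : Fin n)
    (hj : R.wordProd L (R.simple j) ∉ R.Pos) :
    ∃ M : List (Fin n), M.length + 1 = L.length ∧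
      R.wordProd L * rsReflectEquiv (R.simple j) = R.wordProd M := by
  induction L with
  | nil => exact absurd (R.simple_mem_pos j) (by simpa using hj)
  | cons i L ih =>
    by_cases hL : R.wordProd L (R.simple j) ∈ R.Pos
    · have hsimple : R.wordProd L (R.simple j) = R.simple i := by
        by_contra hne
        exact hj (R.rsReflect_simple_mem_pos i hL hne)
      refine ⟨L, rfl, ?_⟩
      rw [wordProd_cons, ← hsimple,
        rsReflectEquiv_map (R.inner_map_map_of_mem_weyl (R.wordProd_mem_weyl L))]
      group
      rw [mul_assoc, rsReflectEquiv_mul_self, mul_one]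
    · obtain ⟨M, hlen, hM⟩ := ih hL
      refine ⟨i :: M, by simp [← hlen], ?_⟩
      rw [wordProd_cons, wordProd_cons, mul_assoc, hM]

end Words

section Dominance

lemma coords_wordProd_le {l : V} (hl : R.IsDomVec l) (L : List (Fin n)) :
    R.coords (R.wordProd L l) ≤ R.coords l := by
  induction hlen : L.length using Nat.strong_induction_on generalizing L with
  | _ N ih =>
  rcases L.eq_nil_or_concat with rfl | ⟨M, j, rfl⟩
  · simp
  have hMj : R.wordProd (M.concat j) = R.wordProd M * rsReflectEquiv (R.simple j) := by
    rw [List.concat_eq_append, wordProd_append, wordProd_singleton]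
  by_cases hpos : R.wordProd M (R.simple j) ∈ R.Pos
  · calc R.coords (R.wordProd (M.concat j) l)
        = R.coords (R.wordProd M l)
          - ⟪l, corootOf (R.simple j)⟫ • R.coords (R.wordProd M (R.simple j)) := by
          rw [hMj, LinearEquiv.mul_apply, rsReflectEquiv_apply, rsReflect, map_sub, map_smul,
            map_sub, map_smul]
      _ ≤ R.coords (R.wordProd M l) :=
          sub_le_self _ (smul_nonneg (hl j) (R.coords_nonneg_of_mem_pos hpos))
      _ ≤ R.coords l := ih M.length (by simp [← hlen]) M rfl
  · obtain ⟨M', hlen', hM'⟩ := R.exchange_condition M j hpos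
    rw [hMj, hM']
    exact ih M'.length (by simp [← hlen, ← hlen']) M' rfl

lemma coords_map_le_of_mem_weyl {w : V ≃ₗ[ℝ] V} (hw : w ∈ R.weyl) {l : V} (hl : R.IsDomVec l) :
    R.coords (w l) ≤ R.coords l := by
  obtain ⟨L, rfl⟩ := R.exists_eq_wordProd hw
  exact R.coords_wordProd_le hl L

lemma inner_nonneg_of_coords_nonneg {x y : V} (hx : 0 ≤ R.coords x) (hy : R.IsDomVec y) :
    0 ≤ ⟪x, y⟫ := by
  rw [← R.coords.symm_apply_apply x, coords_symm_apply, sum_inner]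
  refine Finset.sum_nonneg fun i _ => ?_
  rw [real_inner_smul_left, real_inner_comm]
  exact mul_nonneg (hx i) ((inner_corootOf_nonneg_iff (R.nonzero _ (R.simple_mem i)) y).mp (hy i))

lemma exists_mem_weyl_isDomVec (v : V) : ∃ u ∈ R.weyl, R.IsDomVec (u v) := by
  have := R.finite_weyl
  obtain ⟨u, hu⟩ := Finite.exists_max fun u : R.weyl => ∑ i, R.coords (u.1 v) i
  refine ⟨u.1, u.2, fun i => ?_⟩
  have := hu ⟨rsReflectEquiv (R.simple i) * u.1,
    R.weyl.mul_mem (R.rsReflectEquiv_mem_weyl (R.simple_mem i)) u.2⟩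
  rw [LinearEquiv.mul_apply, rsReflectEquiv_apply, sum_coords_rsReflect_simple] at this
  linarith

/-- `R.coords u ≤ R.coords l` says that `l - u` is a nonnegative real combination of simple
roots. -/
def dominatedSet (l : V) : Set V := {v | ∀ w ∈ R.weyl, R.coords (w v) ≤ R.coords l}

lemma convex_dominatedSet (l : V) : Convex ℝ (R.dominatedSet l) := by
  intro x hx y hy a b ha hb hab w hw
  calc R.coords (w (a • x + b • y)) = a • R.coords (w x) + b • R.coords (w y) := by
        simp only [map_add, map_smul]
    _ ≤ a • R.coords l + b • R.coords l :=
        add_le_add (smul_le_smul_of_nonneg_left (hx w hw) ha)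
          (smul_le_smul_of_nonneg_left (hy w hw) hb)
    _ = R.coords l := by rw [← add_smul, hab, one_smul]

lemma perm_subset_dominatedSet {l : V} (hl : R.IsDomVec l) : R.perm l ⊆ R.dominatedSet l := by
  refine convexHull_min ?_ (R.convex_dominatedSet l)
  rintro _ ⟨u, hu, rfl⟩ w hw
  exact R.coords_map_le_of_mem_weyl (R.weyl.mul_mem hw hu) hl

/-- A point outside `Π(l)` is separated from it by a functional `⟨·, y⟩`; moving `y` into the
dominant chamber by some `u ∈ W` shows that `u v ≤ l` fails. -/
lemma dominatedSet_subset_perm (l : V) : R.dominatedSet l ⊆ R.perm l := by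
  intro v hv
  by_contra hout
  have := R.finiteDimensional
  obtain ⟨f, c, hf, hfv⟩ := geometric_hahn_banach_closed_point (convex_convexHull ℝ _)
    ((R.finite_orbit l).isCompact_convexHull (𝕜 := ℝ)).isClosed hout
  obtain ⟨u, hu, hdom⟩ := R.exists_mem_weyl_isDomVec ((InnerProductSpace.toDual ℝ V).symm f)
  set y := (InnerProductSpace.toDual ℝ V).symm f
  have hfy : ∀ x, f x = ⟪y, x⟫ := fun x => (InnerProductSpace.toDual_symm_apply).symm
  have hvl : ⟪u v, u y⟫ ≤ ⟪l, u y⟫ := by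
    have := R.inner_nonneg_of_coords_nonneg (x := l - u v)
      (by rw [map_sub]; exact sub_nonneg.mpr (hv u hu)) hdom
    rw [inner_sub_left] at this
    linarith
  have hl := hf _ (subset_convexHull ℝ _ ⟨u⁻¹, R.weyl.inv_mem hu, rfl⟩)
  have hinv : u (u⁻¹ l) = l := u.apply_symm_apply l
  rw [hfy, real_inner_comm, ← R.inner_map_map_of_mem_weyl hu, hinv] at hl
  rw [hfy, real_inner_comm, ← R.inner_map_map_of_mem_weyl hu] at hfv
  linarith

lemma perm_eq_dominatedSet {l : V} (hl : R.IsDomVec l) : R.perm l = R.dominatedSet l :=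
  (R.perm_subset_dominatedSet hl).antisymm (R.dominatedSet_subset_perm l)

end Dominance

section Meet

noncomputable def meet (x y : V) : V := R.coords.symm (R.coords x ⊓ R.coords y)

lemma coords_meet (x y : V) : R.coords (R.meet x y) = R.coords x ⊓ R.coords y :=
  R.coords.apply_symm_apply _

lemma meet_comm (x y : V) : R.meet x y = R.meet y x := by
  rw [meet, inf_comm, meet]

lemma meet_add_add_right (x y z : V) : R.meet (x + z) (y + z) = R.meet x y + z := by
  rw [meet, meet, map_add, map_add, ← inf_add, map_add, LinearEquiv.symm_apply_apply]

lemma meet_sum_smul_simple (a b : Fin n → ℝ) :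
    R.meet (∑ i, a i • R.simple i) (∑ i, b i • R.simple i) = ∑ i, min (a i) (b i) • R.simple i := by
  rw [meet, coords_sum, coords_sum, coords_symm_apply]
  rfl

lemma dominatedSet_inter_dominatedSet (x y : V) :
    R.dominatedSet x ∩ R.dominatedSet y = R.dominatedSet (R.meet x y) := by
  ext v
  simp only [Set.mem_inter_iff, dominatedSet, Set.mem_ofPred_eq, coords_meet, le_inf_iff,
    forall₂_and]

lemma inner_corootOf_simple_le {x y : V} {j : Fin n} (hxy : R.coords x ≤ R.coords y)
    (hj : R.coords x j = R.coords y j) :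
    ⟪y, corootOf (R.simple j)⟫ ≤ ⟪x, corootOf (R.simple j)⟫ := by
  have : 0 ≤ ⟪x - y, corootOf (R.simple j)⟫ := by
    rw [← R.coords.symm_apply_apply (x - y), coords_symm_apply, sum_inner]
    refine Finset.sum_nonneg fun i _ => ?_
    rw [real_inner_smul_left, map_sub]
    rcases eq_or_ne i j with rfl | hij
    · simp [hj]
    · exact mul_nonneg_of_nonpos_of_nonpos (sub_nonpos.mpr (hxy i))
        (R.inner_simple_corootOf_nonpos hij)
  rw [inner_sub_left] at this
  linarith

lemma isDomVec_meet {x y : V} (hx : R.IsDomVec x) (hy : R.IsDomVec y) :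
    R.IsDomVec (R.meet x y) := by
  intro j
  rcases le_total (R.coords x j) (R.coords y j) with h | h
  · refine (hx j).trans (R.inner_corootOf_simple_le ?_ ?_) <;> rw [coords_meet]
    exacts [inf_le_left, inf_of_le_left h]
  · refine (hy j).trans (R.inner_corootOf_simple_le ?_ ?_) <;> rw [coords_meet]
    exacts [inf_le_right, inf_of_le_right h]

lemma isDomVec_add {x y : V} (hx : R.IsDomVec x) (hy : R.IsDomVec y) : R.IsDomVec (x + y) :=
  fun i => by rw [inner_add_left]; exact add_nonneg (hx i) (hy i)

lemma perm_inter_perm {x y : V} (hx : R.IsDomVec x) (hy : R.IsDomVec y) :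
    R.perm x ∩ R.perm y = R.perm (R.meet x y) := by
  rw [R.perm_eq_dominatedSet hx, R.perm_eq_dominatedSet hy,
    R.perm_eq_dominatedSet (R.isDomVec_meet hx hy), dominatedSet_inter_dominatedSet]

end Meet

section RootLattice

lemma coords_int_of_mem_Φ {α : V} (hα : α ∈ R.Φ) (i : Fin n) : ∃ z : ℤ, R.coords α i = z := by
  rcases R.root_combo α hα with ⟨c, rfl⟩ | ⟨c, rfl⟩
  · exact ⟨c i, by rw [coords_sum]; simp⟩
  · exact ⟨-c i, by rw [map_neg, coords_sum]; simp⟩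

lemma mem_rootLattice_iff {x : V} : x ∈ R.rootLattice ↔ ∀ i, ∃ z : ℤ, R.coords x i = z := by
  constructor
  · intro hx
    induction hx using AddSubgroup.closure_induction with
    | mem α hα => exact R.coords_int_of_mem_Φ hα
    | zero => exact fun i => ⟨0, by simp⟩
    | add x y _ _ hx hy =>
      intro i
      obtain ⟨a, ha⟩ := hx i
      obtain ⟨b, hb⟩ := hy i
      exact ⟨a + b, by simp [ha, hb]⟩
    | neg x _ hx =>
      intro i
      obtain ⟨a, ha⟩ := hx i
      exact ⟨-a, by simp [ha]⟩
  · intro h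
    choose z hz using h
    rw [← R.coords.symm_apply_apply x, coords_symm_apply]
    refine AddSubgroup.sum_mem _ fun i _ => ?_
    rw [hz i, Int.cast_smul_eq_zsmul]
    exact AddSubgroup.zsmul_mem _ (AddSubgroup.subset_closure (R.simple_mem i)) _

lemma sub_meet_mem_rootLattice {x y : V} (h : x - y ∈ R.rootLattice) :
    x - R.meet x y ∈ R.rootLattice := by
  rw [mem_rootLattice_iff] at h ⊢
  intro i
  obtain ⟨z, hz⟩ := h i
  refine ⟨max z 0, ?_⟩
  simp only [map_sub, Pi.sub_apply, coords_meet, Pi.inf_apply] at hz ⊢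
  push_cast
  rw [← hz]
  rcases le_total (R.coords x i) (R.coords y i) with hle | hle <;> simp [hle]

lemma latticeCoset_eq_of_sub_mem {x y : V} (h : x - y ∈ R.rootLattice) :
    R.latticeCoset x = R.latticeCoset y := by
  ext v
  have hsplit : v - x = (v - y) - (x - y) := by abel
  simp only [latticeCoset, Set.mem_ofPred_eq, hsplit]
  exact ⟨fun hv => by simpa using add_mem hv h, fun hv => sub_mem hv h⟩

end RootLattice

end RootSystemData

/-- Here `l` is `λ`, `a` and `a'` are the coordinates of `λ` and `μ` in the basis of simple roots,
so that `λ ∧ μ = ∑ i, min (a i) (a' i) • α_i`, and `ρk` is `ρ_𝐤`. -/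
theorem perm_intersections_general {V : Type*} [NormedAddCommGroup V] [InnerProductSpace ℝ V]
    {n : ℕ} (R : RootSystemData V n) (l μ : V)
    (hl : R.IsDominant l) (hμ : R.IsDominant μ) (hQ : l - μ ∈ R.rootLattice)
    (k : V → ℕ)
    (ρk : V) (hρk : ∀ i, ⟪ρk, corootOf (R.simple i)⟫ = (k (R.simple i) : ℝ))
    (a a' : Fin n → ℝ)
    (ha : l = ∑ i, a i • R.simple i) (ha' : μ = ∑ i, a' i • R.simple i) :
    R.perm (l + ρk) ∩ R.perm (μ + ρk)
        = R.perm ((∑ i, min (a i) (a' i) • R.simple i) + ρk) ∧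
      R.permQ (l + ρk) ∩ R.permQ (μ + ρk)
        = R.permQ ((∑ i, min (a i) (a' i) • R.simple i) + ρk) := by
  have hρ : R.IsDomVec ρk := fun i => by rw [hρk i]; exact Nat.cast_nonneg _
  have hmeet : ∑ i, min (a i) (a' i) • R.simple i + ρk = R.meet (l + ρk) (μ + ρk) := by
    rw [R.meet_add_add_right, ha, ha', R.meet_sum_smul_simple]
  have hperm := R.perm_inter_perm (R.isDomVec_add hl.2 hρ) (R.isDomVec_add hμ.2 hρ)
  have hQl : l + ρk - R.meet (l + ρk) (μ + ρk) ∈ R.rootLattice :=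
    R.sub_meet_mem_rootLattice (by rwa [add_sub_add_right_eq_sub])
  have hQμ : μ + ρk - R.meet (l + ρk) (μ + ρk) ∈ R.rootLattice := by
    rw [R.meet_comm]
    exact R.sub_meet_mem_rootLattice (by rw [add_sub_add_right_eq_sub, ← neg_sub]; exact neg_mem hQ)
  rw [hmeet]
  refine ⟨hperm, ?_⟩
  rw [RootSystemData.permQ, RootSystemData.permQ, RootSystemData.permQ,
    R.latticeCoset_eq_of_sub_mem hQl, R.latticeCoset_eq_of_sub_mem hQμ,
    Set.inter_inter_inter_comm, Set.inter_self, hperm]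

/-- Proposition 3.6: intersections of (discrete) permutohedra
`Π(λ+ρ_𝐤)` are given by the meet `λ∧μ` in root order.  Here `a`, `a'` are the
coordinates of `λ`, `μ` in the basis of simple roots, so that
`λ∧μ = Σ min(a_i, a'_i) α_i`, and `ρk` is the vector `ρ_𝐤`. -/
theorem perm_intersections {V : Type*} [NormedAddCommGroup V] [InnerProductSpace ℝ V]
    {n : ℕ} (R : RootSystemData V n) (l μ : V)
    (hl : R.IsDominant l) (hμ : R.IsDominant μ) (hQ : l - μ ∈ R.rootLattice)
    (k : V → ℕ) (hk : R.IsWInvariant k)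
    (ρk : V) (hρk : ∀ i, ⟪ρk, corootOf (R.simple i)⟫ = (k (R.simple i) : ℝ))
    (a a' : Fin n → ℝ)
    (ha : l = ∑ i, a i • R.simple i) (ha' : μ = ∑ i, a' i • R.simple i) :
    R.perm (l + ρk) ∩ R.perm (μ + ρk)
        = R.perm ((∑ i, min (a i) (a' i) • R.simple i) + ρk) ∧
      R.permQ (l + ρk) ∩ R.permQ (μ + ρk)
        = R.permQ ((∑ i, min (a i) (a' i) • R.simple i) + ρk) :=
  perm_intersections_general R l μ hl hμ hQ k ρk hρk a a' ha ha'
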